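/- arXiv:2312.16184 — 5 statements merged into one kernel-verified Lean document; each statement's English description precedes it below -/
import Mathlib

section
/- Let X be a finite percept alphabet and A a finite action alphabet. Let M be a finite class of environments, where an environment ρ assigns to every n and every action sequence a_{1:n} ∈ A^n a probability mass function ρ(· | a_{1:n}) on X^n satisfying the chronological consistency condition Σ_{x_n ∈ X} ρ(x_{1:n} | a_{1:n}) = ρ(x_{<n} | a_{<n}). Let w : M → (0,1] with Σ_{ρ∈M} w_ρ = 1, let ξ(x_{1:n} | a_{1:n}) = Σ_{ρ∈M} w_ρ ρ(x_{1:n} | a_{1:n}) be the Bayesian mixture, and let μ be any environment (with conditionals μ(x_k | x_{<k}, a_{1:k}) = μ(x_{1:k}|a_{1:k})/μ(x_{<k}|a_{<k}) whenever the denominator is positive, and similarly for ξ). Then for all n ∈ ℕ and all action sequences a_{1:n}: Σ_{k=1}^{n} Σ_{x_{1:k}} μ(x_{<k} | a_{<k}) · (μ(x_k | x_{<k}, a_{1:k}) − ξ(x_k | x_{<k}, a_{1:k}))² ≤ min_{ρ∈M} { ln(1/w_ρ) + Σ_{x_{1:n}} μ(x_{1:n}|a_{1:n}) ln( μ(x_{1:n}|a_{1:n})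 / ρ(x_{1:n}|a_{1:n}) ) }. -/
/-!
For distributions `y`, `z` on a finite set, Pinsker's inequality `(∑ |y - z|)² ≤ 2 KL(y‖z)`
and the bound `2 ∑ d² ≤ (∑ |d|)²` for `∑ d = 0` give Hutter's entropy inequality
`∑ (y - z)² ≤ KL(y‖z)`. Applied to the next-percept conditionals of `μ` and `ξ` after every
history, and summed up with the chain rule for relative entropy, it bounds the left-hand side by
`KL(μ‖ξ)` on histories of length `n`. Since `ξ ≥ w_ρ ρ`, that is at most `ln (1 / w_ρ) + KL(μ‖ρ)`.
-/

open scoped Classical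

namespace MixtureBound

/-- Conditional probability of the last percept given the length-`m` prefix of
percepts and the actions, with the convention `0/0 = 0`. -/
noncomputable def cond {X A : Type} (ρ : (n : ℕ) → (Fin n → A) → (Fin n → X) → ℝ)
    {m : ℕ} (a : Fin (m + 1) → A) (x : Fin (m + 1) → X) : ℝ :=
  ρ (m + 1) a x / ρ m (fun j => a j.castSucc) (fun j => x j.castSucc)

open Finset Real

section Divergence

variable {ι : Type*}

theorem mul_log_div_le_sum_mul_log_div (s : Finset ι) (y z : ι → ℝ)
    (hy : ∀ j ∈ s, 0 ≤ y j) (hz : ∀ j ∈ s, 0 ≤ z j) (hac : ∀ j ∈ s, z j = 0 → y j = 0) :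
    (∑ j ∈ s, y j) * log ((∑ j ∈ s, y j) / ∑ j ∈ s, z j) ≤
      ∑ j ∈ s, y j * log (y j / z j) := by
  rcases (sum_nonneg hz).eq_or_lt with hZ | hZ
  · have hz0 : ∀ j ∈ s, z j = 0 := (sum_eq_zero_iff_of_nonneg hz).1 hZ.symm
    rw [← hZ, div_zero, log_zero, mul_zero]
    exact (sum_eq_zero fun j hj => by rw [hz0 j hj, div_zero, log_zero, mul_zero]).ge
  set Z := ∑ j ∈ s, z j
  have hweight : ∀ j ∈ s, z j / Z * (y j / z j) = y j / Z := fun j hj => by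
    by_cases h : z j = 0
    · simp [h, hac j hj h]
    · field_simp
  have hmean : ∑ j ∈ s, z j / Z * (y j / z j) = (∑ j ∈ s, y j) / Z := by
    rw [sum_div]
    exact sum_congr rfl hweight
  have hvalue : ∑ j ∈ s, z j / Z * (y j / z j * log (y j / z j)) =
      (∑ j ∈ s, y j * log (y j / z j)) / Z := by
    rw [sum_div]
    exact sum_congr rfl fun j hj => by rw [← mul_assoc, hweight j hj, div_mul_eq_mul_div]
  -- Jensen for `t ↦ t log t` with weights `z j / Z` at the points `y j / z j`
  have hjensen := convexOn_mul_log.map_sum_le (t := s) (w := fun j => z j / Z)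
    (p := fun j => y j / z j) (fun j hj => div_nonneg (hz j hj) hZ.le)
    (by rw [← sum_div, div_self hZ.ne']) (fun j hj => div_nonneg (hy j hj) (hz j hj))
  simp only [smul_eq_mul, hmean, hvalue] at hjensen
  rwa [div_mul_eq_mul_div, div_le_div_iff_of_pos_right hZ] at hjensen

theorem two_mul_sum_sq_le_sq_sum_abs [Fintype ι] (d : ι → ℝ) (hd : ∑ j, d j = 0) :
    2 * ∑ j, d j ^ 2 ≤ (∑ j, |d j|) ^ 2 := by
  set S := ∑ j, |d j|
  -- `2 |d j| = |d j| ± d j ≤ ∑ (|d| ± d) = S`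
  have hbound : ∀ j, 2 * |d j| ≤ S := fun j => by
    have hplus : |d j| + d j ≤ ∑ k, (|d k| + d k) :=
      single_le_sum (f := fun k => |d k| + d k) (fun k _ => by linarith [neg_abs_le (d k)])
        (mem_univ j)
    have hminus : |d j| - d j ≤ ∑ k, (|d k| - d k) :=
      single_le_sum (f := fun k => |d k| - d k) (fun k _ => by linarith [le_abs_self (d k)])
        (mem_univ j)
    rw [sum_add_distrib, hd] at hplus
    rw [sum_sub_distrib, hd] at hminus
    cases abs_cases (d j) <;> linarith
  calc 2 * ∑ j, d j ^ 2 = ∑ j, 2 * |d j| * |d j| := by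
        rw [mul_sum]
        exact sum_congr rfl fun j _ => by rw [mul_assoc, ← sq, sq_abs]
    _ ≤ ∑ j, S * |d j| :=
        sum_le_sum fun j _ => mul_le_mul_of_nonneg_right (hbound j) (abs_nonneg _)
    _ = S ^ 2 := by rw [← mul_sum, sq]

theorem hasDerivAt_neg_binEntropy_sub_two_mul_sq {t : ℝ} (ht0 : t ≠ 0) (ht1 : t ≠ 1) :
    HasDerivAt (fun t => -binEntropy t - 2 * t ^ 2) (log t - log (1 - t) - 4 * t) t := by
  refine ((hasDerivAt_binEntropy ht0 ht1).fun_neg.fun_sub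
    ((hasDerivAt_pow 2 t).const_mul 2)).congr_deriv ?_
  push_cast
  ring

theorem convexOn_neg_binEntropy_sub_two_mul_sq :
    ConvexOn ℝ (Set.Icc 0 1) (fun t => -binEntropy t - 2 * t ^ 2) := by
  refine convexOn_of_hasDerivWithinAt2_nonneg (convex_Icc 0 1) (by fun_prop)
    (f' := fun t => log t - log (1 - t) - 4 * t) (f'' := fun t => 1 / t + 1 / (1 - t) - 4)
    (fun t ht => ?_) (fun t ht => ?_) (fun t ht => ?_) <;>
    obtain ⟨ht0, ht1⟩ : 0 < t ∧ t < 1 := by rwa [interior_Icc] at ht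
  · exact (hasDerivAt_neg_binEntropy_sub_two_mul_sq ht0.ne' ht1.ne).hasDerivWithinAt
  · have h1t : HasDerivAt (fun t : ℝ => 1 - t) (-1) t := by
      simpa using (hasDerivAt_id t).const_sub 1
    have h := ((hasDerivAt_log ht0.ne').fun_sub (h1t.log (by linarith))).fun_sub
      ((hasDerivAt_id t).const_mul 4)
    refine (h.congr_deriv ?_).hasDerivWithinAt
    field_simp
    ring
  · have h1t : 1 - t ≠ 0 := by linarith
    have h : 1 / t + 1 / (1 - t) - 4 = (1 - 2 * t) ^ 2 / (t * (1 - t)) := by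
      field_simp
      ring
    rw [h]
    exact div_nonneg (sq_nonneg _) (mul_pos ht0 (by linarith)).le

theorem two_mul_sq_sub_le_mul_log_div_add_mul_log_div {p q : ℝ} (hq : 0 < q) (hqp : q < p)
    (hp : p ≤ 1) :
    2 * (p - q) ^ 2 ≤ p * log (p / q) + (1 - p) * log ((1 - p) / (1 - q)) := by
  have hq1 : q < 1 := hqp.trans_le hp
  -- the tangent of the convex function `-H(t) - 2 t²` at `q` lies below it at `p`
  have htangent := convexOn_neg_binEntropy_sub_two_mul_sq.le_slope_of_hasDerivAt
    ⟨hq.le, hq1.le⟩ ⟨(hq.trans hqp).le, hp⟩ hqp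
    (hasDerivAt_neg_binEntropy_sub_two_mul_sq hq.ne' hq1.ne)
  rw [slope_def_field, le_div_iff₀ (sub_pos.2 hqp)] at htangent
  simp only [binEntropy, log_inv] at htangent
  have hlog_p : p * log (p / q) = p * log p - p * log q := by
    rw [log_div (hq.trans hqp).ne' hq.ne']
    ring
  have hlog_one_sub_p :
      (1 - p) * log ((1 - p) / (1 - q)) = (1 - p) * log (1 - p) - (1 - p) * log (1 - q) := by
    rcases hp.eq_or_lt with rfl | hp1
    · simp
    · rw [log_div (by linarith) (by linarith)]
      ring
  rw [hlog_p, hlog_one_sub_p]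
  nlinarith [htangent]

variable [Fintype ι]

theorem sq_sum_abs_sub_le_two_mul_sum_mul_log_div (y z : ι → ℝ)
    (hy : ∀ j, 0 ≤ y j) (hz : ∀ j, 0 ≤ z j) (hy1 : ∑ j, y j = 1) (hz1 : ∑ j, z j = 1)
    (hac : ∀ j, z j = 0 → y j = 0) :
    (∑ j, |y j - z j|) ^ 2 ≤ 2 * ∑ j, y j * log (y j / z j) := by
  set B := univ.filter fun j => z j < y j
  set p := ∑ j ∈ B, y j
  set q := ∑ j ∈ B, z j
  have hy_compl : ∑ j ∈ univ.filter (fun j => ¬ z j < y j), y j = 1 - p := by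
    rw [← hy1, ← sum_filter_add_sum_filter_not univ fun j => z j < y j]
    ring
  have hz_compl : ∑ j ∈ univ.filter (fun j => ¬ z j < y j), z j = 1 - q := by
    rw [← hz1, ← sum_filter_add_sum_filter_not univ fun j => z j < y j]
    ring
  have htv : ∑ j, |y j - z j| = 2 * (p - q) := by
    rw [← sum_filter_add_sum_filter_not univ fun j => z j < y j,
      sum_congr rfl fun j hj => abs_of_pos (sub_pos.2 (mem_filter.1 hj).2),
      sum_congr rfl fun j hj => abs_of_nonpos (sub_nonpos.2 (not_lt.1 (mem_filter.1 hj).2)),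
      sum_sub_distrib, sum_neg_distrib, sum_sub_distrib, hy_compl, hz_compl]
    ring
  -- the log-sum inequality on `B` and on its complement reduces to the binary case
  have hbinary : p * log (p / q) + (1 - p) * log ((1 - p) / (1 - q)) ≤
      ∑ j, y j * log (y j / z j) := by
    rw [← sum_filter_add_sum_filter_not univ fun j => z j < y j]
    have hB := mul_log_div_le_sum_mul_log_div B y z (fun j _ => hy j) (fun j _ => hz j)
      (fun j _ => hac j)
    have hBc := mul_log_div_le_sum_mul_log_div (univ.filter fun j => ¬ z j < y j) y z
      (fun j _ => hy j) (fun j _ => hz j) (fun j _ => hac j)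
    rw [hy_compl, hz_compl] at hBc
    exact add_le_add hB hBc
  have hqp : q ≤ p := sum_le_sum fun j hj => (mem_filter.1 hj).2.le
  rcases hqp.eq_or_lt with hpq | hqp
  · have hgibbs := mul_log_div_le_sum_mul_log_div univ y z (fun j _ => hy j)
      (fun j _ => hz j) (fun j _ => hac j)
    rw [hy1, hz1, div_one, log_one, mul_zero] at hgibbs
    rw [htv, hpq, sub_self]
    linarith
  have hq : 0 < q := by
    by_contra hq0
    have hz0 : ∀ j ∈ B, z j = 0 := (sum_eq_zero_iff_of_nonneg fun j _ => hz j).1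
      (le_antisymm (not_lt.1 hq0) (sum_nonneg fun j _ => hz j))
    have hp0 : p = 0 := sum_eq_zero fun j hj => hac j (hz0 j hj)
    linarith [(sum_nonneg fun j _ => hz j : 0 ≤ q)]
  have hp : p ≤ 1 := hy1 ▸ sum_le_univ_sum_of_nonneg hy
  rw [htv]
  nlinarith [two_mul_sq_sub_le_mul_log_div_add_mul_log_div hq hqp hp]

theorem sum_sq_sub_le_sum_mul_log_div (y z : ι → ℝ)
    (hy : ∀ j, 0 ≤ y j) (hz : ∀ j, 0 ≤ z j) (hy1 : ∑ j, y j = 1) (hz1 : ∑ j, z j = 1)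
    (hac : ∀ j, z j = 0 → y j = 0) :
    ∑ j, (y j - z j) ^ 2 ≤ ∑ j, y j * log (y j / z j) := by
  have hsum : ∑ j, (y j - z j) = 0 := by rw [sum_sub_distrib, hy1, hz1, sub_self]
  linarith [two_mul_sum_sq_le_sq_sum_abs _ hsum,
    sq_sum_abs_sub_le_two_mul_sum_mul_log_div y z hy hz hy1 hz1 hac]

theorem mul_sum_sq_sub_add_mul_log_le_sum_mul_log_div (u v : ι → ℝ)
    (hu : ∀ j, 0 ≤ u j) (hv : ∀ j, 0 ≤ v j) (hac : ∀ j, v j = 0 → u j = 0) :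
    (∑ j, u j) * ∑ j, (u j / ∑ k, u k - v j / ∑ k, v k) ^ 2 +
        (∑ j, u j) * log ((∑ j, u j) / ∑ j, v j) ≤ ∑ j, u j * log (u j / v j) := by
  rcases (sum_nonneg fun j _ => hu j).eq_or_lt with hU | hU
  · have hu0 := (sum_eq_zero_iff_of_nonneg fun j _ => hu j).1 hU.symm
    rw [← hU, zero_mul, zero_mul, add_zero]
    exact (sum_eq_zero fun j _ => by rw [hu0 j (mem_univ j), zero_mul]).ge
  set U := ∑ j, u j
  set V := ∑ j, v j
  have hV : 0 < V := by
    obtain ⟨j, -, hj⟩ := exists_lt_of_sum_lt (f := fun _ => (0 : ℝ)) (by simpa using hU)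
    exact (lt_of_le_of_ne (hv j) fun h => hj.ne' (hac j h.symm)).trans_le
      (single_le_sum (fun k _ => hv k) (mem_univ j))
  have hentropy := sum_sq_sub_le_sum_mul_log_div (fun j => u j / U) (fun j => v j / V)
    (fun j => div_nonneg (hu j) hU.le) (fun j => div_nonneg (hv j) hV.le)
    (by rw [← sum_div, div_self hU.ne']) (by rw [← sum_div, div_self hV.ne'])
    (fun j h => by rw [hac j ((div_eq_zero_iff.1 h).resolve_right hV.ne'), zero_div])
  -- chain rule: the relative entropy splits into that of the totals and of the normalized vectors
  have hchain : ∑ j, u j * log (u j / v j) =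
      U * log (U / V) + U * ∑ j, u j / U * log (u j / U / (v j / V)) := by
    have hterm : ∀ j, u j * log (u j / v j) =
        u j * log (U / V) + U * (u j / U * log (u j / U / (v j / V))) := fun j => by
      rcases (hu j).eq_or_lt with hj | hj
      · rw [← hj]
        simp
      have hvj : 0 < v j := (hv j).lt_of_ne fun h => hj.ne' (hac j h.symm)
      rw [div_div_div_comm, log_div (div_pos hj hvj).ne' (div_pos hU hV).ne']
      field_simp
      ring
    rw [sum_congr rfl fun j _ => hterm j, sum_add_distrib, ← sum_mul, ← mul_sum]
  rw [hchain]
  nlinarith [mul_le_mul_of_nonneg_left hentropy hU.le]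

theorem sum_mul_log_div_le_log_inv_add (y p q : ι → ℝ) (hy : ∀ j, 0 ≤ y j)
    (hy1 : ∑ j, y j = 1) {c : ℝ} (hc : 0 < c) (hcq : ∀ j, c * q j ≤ p j)
    (hac : ∀ j, 0 < y j → 0 < q j) :
    ∑ j, y j * log (y j / p j) ≤ log (1 / c) + ∑ j, y j * log (y j / q j) := by
  calc ∑ j, y j * log (y j / p j) ≤ ∑ j, (y j * log (1 / c) + y j * log (y j / q j)) := by
        refine sum_le_sum fun j _ => ?_
        rcases (hy j).eq_or_lt with hj | hj
        · rw [← hj]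
          simp
        have hqc : q j * c ≤ p j := mul_comm c (q j) ▸ hcq j
        have hqc_pos : 0 < q j * c := mul_pos (hac j hj) hc
        rw [← mul_add, ← log_mul (by positivity) (div_pos hj (hac j hj)).ne',
          one_div_mul_eq_div, div_div]
        exact mul_le_mul_of_nonneg_left (log_le_log (div_pos hj (hqc_pos.trans_le hqc))
          (div_le_div_of_nonneg_left hj.le hqc_pos hqc)) hj.le
    _ = log (1 / c) + ∑ j, y j * log (y j / q j) := by
        rw [sum_add_distrib, ← sum_mul, hy1, one_mul]

end Divergence

theorem sum_eq_sum_sum_snoc {X M : Type*} [Fintype X] [AddCommMonoid M] {m : ℕ}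
    (f : (Fin (m + 1) → X) → M) : ∑ x, f x = ∑ p : Fin m → X, ∑ z, f (Fin.snoc p z) := by
  rw [← (Fin.snocEquiv fun _ => X).sum_comp, Fintype.sum_prod_type_right]
  rfl

section Environment

abbrev Env (A X : Type) : Type := (n : ℕ) → (Fin n → A) → (Fin n → X) → ℝ

variable {X A : Type}

def mixture {I : Type} [Fintype I] (w : I → ℝ) (ρ : I → Env A X) : Env A X :=
  fun n a x => ∑ i, w i * ρ i n a x

theorem mul_le_mixture {I : Type} [Fintype I] {w : I → ℝ} {ρ : I → Env A X}
    (hρ : ∀ i n a x, 0 ≤ ρ i n a x) (hw : ∀ i, 0 ≤ w i) (i : I) (n : ℕ) (a : Fin n → A)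
    (x : Fin n → X) : w i * ρ i n a x ≤ mixture w ρ n a x :=
  single_le_sum (f := fun i => w i * ρ i n a x) (fun i _ => mul_nonneg (hw i) (hρ i n a x))
    (mem_univ i)

def AbsContAt (μ ν : Env A X) (n : ℕ) (a : Fin n → A) : Prop :=
  ∀ x, 0 < μ n a x → 0 < ν n a x

variable [Fintype X]

structure IsChronological (ρ : Env A X) : Prop where
  nonneg : ∀ n a x, 0 ≤ ρ n a x
  sum_snoc : ∀ n (a : Fin (n + 1) → A) (x : Fin n → X),
    ∑ z, ρ (n + 1) a (Fin.snoc x z) = ρ n (fun j => a j.castSucc) x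

structure IsEnvironment (ρ : Env A X) : Prop extends IsChronological ρ where
  sum_eq_one : ∀ n a, ∑ x, ρ n a x = 1

noncomputable def relEntropy (μ ν : Env A X) (n : ℕ) (a : Fin n → A) : ℝ :=
  ∑ x, μ n a x * log (μ n a x / ν n a x)

noncomputable def condSqDist (μ ν : Env A X) {m : ℕ} (a : Fin (m + 1) → A) : ℝ :=
  ∑ x : Fin (m + 1) → X,
    μ m (fun j => a j.castSucc) (Fin.init x) * (cond μ a x - cond ν a x) ^ 2

variable {μ ν : Env A X}

theorem IsEnvironment.mixture {I : Type} [Fintype I] {w : I → ℝ} {ρ : I → Env A X}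
    (hρ : ∀ i, IsEnvironment (ρ i)) (hw : ∀ i, 0 ≤ w i) (hw1 : ∑ i, w i = 1) :
    IsEnvironment (mixture w ρ) where
  nonneg n a x := sum_nonneg fun i _ => mul_nonneg (hw i) ((hρ i).nonneg n a x)
  sum_snoc n a x := by
    simp only [MixtureBound.mixture]
    rw [sum_comm]
    simp only [← mul_sum, (hρ _).sum_snoc]
  sum_eq_one n a := by
    simp only [MixtureBound.mixture]
    rw [sum_comm]
    simp only [← mul_sum, (hρ _).sum_eq_one, mul_one, hw1]

theorem AbsContAt.castSucc (hμ : IsChronological μ) (hν : IsChronological ν) {m : ℕ}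
    {a : Fin (m + 1) → A} (h : AbsContAt μ ν (m + 1) a) :
    AbsContAt μ ν m (fun j => a j.castSucc) := fun x hx => by
  rw [← hμ.sum_snoc] at hx
  obtain ⟨z, -, hz⟩ := exists_lt_of_sum_lt (f := fun _ => (0 : ℝ)) (by simpa using hx)
  rw [← hν.sum_snoc]
  exact (h _ hz).trans_le (single_le_sum (fun z _ => hν.nonneg _ _ _) (mem_univ z))

theorem relEntropy_zero (hμ : IsEnvironment μ) (hν : IsEnvironment ν) (a : Fin 0 → A) :
    relEntropy μ ν 0 a = 0 := by
  have hμ1 := hμ.sum_eq_one 0 a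
  have hν1 := hν.sum_eq_one 0 a
  rw [Fintype.sum_unique] at hμ1 hν1
  rw [relEntropy, Fintype.sum_unique, hμ1, hν1, div_one, log_one, mul_zero]

theorem condSqDist_add_relEntropy_le (hμ : IsChronological μ) (hν : IsChronological ν)
    {m : ℕ} (a : Fin (m + 1) → A) (hac : AbsContAt μ ν (m + 1) a) :
    condSqDist μ ν a + relEntropy μ ν m (fun j => a j.castSucc) ≤ relEntropy μ ν (m + 1) a := by
  rw [condSqDist, relEntropy, relEntropy, sum_eq_sum_sum_snoc, sum_eq_sum_sum_snoc,
    ← sum_add_distrib]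
  refine sum_le_sum fun p _ => ?_
  have key := mul_sum_sq_sub_add_mul_log_le_sum_mul_log_div
    (fun z => μ (m + 1) a (Fin.snoc p z)) (fun z => ν (m + 1) a (Fin.snoc p z))
    (fun z => hμ.nonneg _ _ _) (fun z => hν.nonneg _ _ _)
    (fun z hz => (not_lt.1 fun h => (hac _ h).ne' hz).antisymm (hμ.nonneg _ _ _))
  rw [hμ.sum_snoc, hν.sum_snoc] at key
  simpa [cond, Fin.init_snoc, mul_sum] using key

theorem sum_condSqDist_le_relEntropy (hμ : IsEnvironment μ) (hν : IsEnvironment ν) :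
    ∀ n (a : Fin n → A), AbsContAt μ ν n a →
      ∑ k : Fin n, condSqDist μ ν (fun j => a (Fin.castLE k.isLt j)) ≤ relEntropy μ ν n a
  | 0, a, _ => by simp [relEntropy_zero hμ hν]
  | n + 1, a, hac => by
    rw [Fin.sum_univ_castSucc]
    have ih := sum_condSqDist_le_relEntropy hμ hν n _
      (hac.castSucc hμ.toIsChronological hν.toIsChronological)
    have step := condSqDist_add_relEntropy_le hμ.toIsChronological hν.toIsChronological a hac
    calc _ ≤ relEntropy μ ν n (fun j => a j.castSucc) + condSqDist μ ν a := add_le_add ih le_rfl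
      _ ≤ relEntropy μ ν (n + 1) a := by linarith

end Environment

theorem mixture_environment_convergence_general
    {X A : Type} [Fintype X]
    {I : Type} [Fintype I]
    (ρ : I → (n : ℕ) → (Fin n → A) → (Fin n → X) → ℝ)
    (hρnn : ∀ i n a x, 0 ≤ ρ i n a x)
    (hρsum : ∀ i n a, ∑ x : Fin n → X, ρ i n a x = 1)
    (hρchr : ∀ i n (a : Fin (n + 1) → A) (x : Fin n → X),
        ∑ z : X, ρ i (n + 1) a (Fin.snoc x z) = ρ i n (fun j => a j.castSucc) x)
    (w : I → ℝ) (hw0 : ∀ i, 0 < w i) (hws : ∑ i, w i = 1)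
    (μ : (n : ℕ) → (Fin n → A) → (Fin n → X) → ℝ)
    (hμnn : ∀ n a x, 0 ≤ μ n a x)
    (hμsum : ∀ n a, ∑ x : Fin n → X, μ n a x = 1)
    (hμchr : ∀ n (a : Fin (n + 1) → A) (x : Fin n → X),
        ∑ z : X, μ (n + 1) a (Fin.snoc x z) = μ n (fun j => a j.castSucc) x)
    (n : ℕ) (a : Fin n → A) :
    ((∑ k : Fin n, ∑ x : Fin (k.val + 1) → X,
        μ k.val (fun j => a (Fin.castLE k.isLt.le j)) (fun j => x j.castSucc) *
          (cond μ (fun j => a (Fin.castLE k.isLt j)) x -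
            cond (fun m a' x' => ∑ i, w i * ρ i m a' x')
              (fun j => a (Fin.castLE k.isLt j)) x) ^ 2 : ℝ) : EReal)
      ≤ ⨅ i : I,
          ((Real.log (1 / w i) : EReal) +
            (if ∀ x : Fin n → X, 0 < μ n a x → 0 < ρ i n a x then
              ((∑ x : Fin n → X, μ n a x * Real.log (μ n a x / ρ i n a x) : ℝ) : EReal)
            else (⊤ : EReal))) := by
  have hμ : IsEnvironment μ := ⟨⟨hμnn, hμchr⟩, hμsum⟩
  have hξ : IsEnvironment (mixture w ρ) :=
    IsEnvironment.mixture (fun i => ⟨⟨hρnn i, hρchr i⟩, hρsum i⟩) (fun i => (hw0 i).le) hws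
  refine le_iInf fun i => ?_
  split_ifs with hac
  · have hdom := mul_le_mixture hρnn (fun i => (hw0 i).le) i n a
    have hacξ : AbsContAt μ (mixture w ρ) n a := fun x hx =>
      (mul_pos (hw0 i) (hac x hx)).trans_le (hdom x)
    rw [← EReal.coe_add, EReal.coe_le_coe_iff]
    exact (sum_condSqDist_le_relEntropy hμ hξ n a hacξ).trans
      (sum_mul_log_div_le_log_inv_add _ _ _ (hμnn n a) (hμsum n a) (hw0 i) hdom hac)
  · rw [EReal.coe_add_top]
    exact le_top

/-- **Convergence of a Bayesian mixture environment model (Hutter).**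
For a finite class of chronologically consistent environments `ρ i` with prior
weights `w i ∈ (0,1]` summing to 1, the Bayesian mixture
`ξ = ∑ i, w i • ρ i` satisfies, for any environment `μ`, any `n` and any action
sequence `a`,
`∑_{k=1}^n ∑_{x_{1:k}} μ(x_{<k}|a_{<k}) (μ(x_k|h_{<k} a_k) − ξ(x_k|h_{<k} a_k))²
  ≤ min_{i} { ln (1/w i) + KL(μ‖ρ i) }`,
the KL term being `+∞` when `μ` puts mass where `ρ i` does not. -/
theorem mixture_environment_convergence
    {X A : Type} [Fintype X] [Fintype A]
    {I : Type} [Fintype I] [Nonempty I]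
    (ρ : I → (n : ℕ) → (Fin n → A) → (Fin n → X) → ℝ)
    (hρnn : ∀ i n a x, 0 ≤ ρ i n a x)
    (hρsum : ∀ i n a, ∑ x : Fin n → X, ρ i n a x = 1)
    (hρchr : ∀ i n (a : Fin (n + 1) → A) (x : Fin n → X),
        ∑ z : X, ρ i (n + 1) a (Fin.snoc x z) = ρ i n (fun j => a j.castSucc) x)
    (w : I → ℝ) (hw0 : ∀ i, 0 < w i) (hw1 : ∀ i, w i ≤ 1) (hws : ∑ i, w i = 1)
    (μ : (n : ℕ) → (Fin n → A) → (Fin n → X) → ℝ)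
    (hμnn : ∀ n a x, 0 ≤ μ n a x)
    (hμsum : ∀ n a, ∑ x : Fin n → X, μ n a x = 1)
    (hμchr : ∀ n (a : Fin (n + 1) → A) (x : Fin n → X),
        ∑ z : X, μ (n + 1) a (Fin.snoc x z) = μ n (fun j => a j.castSucc) x)
    (n : ℕ) (a : Fin n → A) :
    ((∑ k : Fin n, ∑ x : Fin (k.val + 1) → X,
        μ k.val (fun j => a (Fin.castLE k.isLt.le j)) (fun j => x j.castSucc) *
          (cond μ (fun j => a (Fin.castLE k.isLt j)) x -
            cond (fun m a' x' => ∑ i, w i * ρ i m a' x')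
              (fun j => a (Fin.castLE k.isLt j)) x) ^ 2 : ℝ) : EReal)
      ≤ ⨅ i : I,
          ((Real.log (1 / w i) : EReal) +
            (if ∀ x : Fin n → X, 0 < μ n a x → 0 < ρ i n a x then
              ((∑ x : Fin n → X, μ n a x * Real.log (μ n a x / ρ i n a x) : ℝ) : EReal)
            else (⊤ : EReal))) :=
  mixture_environment_convergence_general ρ hρnn hρsum hρchr w hw0 hws μ hμnn hμsum hμchr n a

end MixtureBound
end

section
/- Let X be a convex subset of a real vector space, Y a set, η > 0, and ℓ : X × Y → ℝ a loss function that is η-exp-concave, i.e. for every y ∈ Y the map x ↦ exp(−η ℓ(x,y)) is concave on X. Let M be a finite set of experts, ν : M → (0,1] a prior with Σ_{i∈M} ν_i = 1, and for t = 1,…,T let x_{t,i} ∈ X be expert i's prediction and y_t ∈ Y the outcome. Define L_{t,i} = Σ_{s=1}^{t} ℓ(x_{s,i}, y_s) (with L_{0,i} = 0), weights w_{t,i} = ν_i exp(−η L_{t−1,i}), the Hedge prediction x_t = (Σ_{i∈M} w_{t,i} x_{t,i}) / (Σ_{i∈M} w_{t,i}), and the learner's cumulative loss L_T = Σ_{t=1}^{T}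 ℓ(x_t, y_t). Then for every i ∈ M: L_T − L_{T,i} ≤ (1/η) · log(1/ν_i). -/
/-- **Regret bound for the Hedge algorithm with an η-exp-concave loss.**
Let `X` be a convex subset of a real vector space `V`, `ℓ : V → Y → ℝ` a loss
that is `η`-exp-concave on `X` (i.e. `x ↦ exp (−η ℓ(x,y))` is concave on `X` for
each outcome `y`), `ν` a prior on the finite expert set `M` with values in `(0,1]`
summing to 1, and suppose all expert predictions lie in `X`.  With weights
`w t i = ν i * exp (−η L_{t-1,i})` (rounds indexed `t = 0, …, T-1`, cumulative
losses `L_{t,i} = ∑_{s<t} ℓ(x_{s,i}, y_s)`) and Hedge prediction the normalized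
weighted average of the experts' predictions, the learner's regret to any
expert `i` is at most `(1/η) log (1/ν i)`. -/
theorem hedge_regret_expconcave
    {V : Type*} [AddCommGroup V] [Module ℝ V] {Y : Type*}
    (X : Set V) (hX : Convex ℝ X)
    (η : ℝ) (hη : 0 < η)
    (ℓ : V → Y → ℝ)
    (hconc : ∀ y : Y, ConcaveOn ℝ X (fun x => Real.exp (-η * ℓ x y)))
    {M : Type*} [Fintype M] [Nonempty M]
    (ν : M → ℝ) (hν0 : ∀ i, 0 < ν i) (hν1 : ∀ i, ν i ≤ 1) (hνs : ∑ i, ν i = 1)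
    (T : ℕ) (xp : ℕ → M → V) (hxp : ∀ t i, xp t i ∈ X) (y : ℕ → Y)
    (i : M) :
    (∑ t ∈ Finset.range T,
        ℓ ((∑ j, ν j * Real.exp (-η * ∑ s ∈ Finset.range t, ℓ (xp s j) (y s)))⁻¹ •
            ∑ j, (ν j * Real.exp (-η * ∑ s ∈ Finset.range t, ℓ (xp s j) (y s))) • xp t j)
          (y t))
      - (∑ t ∈ Finset.range T, ℓ (xp t i) (y t))
      ≤ (1 / η) * Real.log (1 / ν i) := by
  classical
  set L : ℕ → M → ℝ := fun t j => ∑ s ∈ Finset.range t, ℓ (xp s j) (y s) with hL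
  set w : ℕ → M → ℝ := fun t j => ν j * Real.exp (-η * L t j) with hw
  set W : ℕ → ℝ := fun t => ∑ j, w t j with hW
  have hwpos : ∀ t j, 0 < w t j := fun t j =>
    mul_pos (hν0 j) (Real.exp_pos _)
  have hWpos : ∀ t, 0 < W t := fun t =>
    Finset.sum_pos (fun j _ => hwpos t j) Finset.univ_nonempty
  -- the Hedge prediction at round t
  set xh : ℕ → V := fun t => (W t)⁻¹ • ∑ j, w t j • xp t j with hxh
  -- per-round inequality: ℓ(xh t, y t) ≤ (1/η) (log (W t) - log (W (t+1)))
  have key : ∀ t, ℓ (xh t) (y t) ≤ (1/η) * (Real.log (W t) - Real.log (W (t+1))) := by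
    intro t
    have hjensen :
        Finset.univ.centerMass (w t) ((fun x => Real.exp (-η * ℓ x (y t))) ∘ xp t)
          ≤ Real.exp (-η * ℓ (Finset.univ.centerMass (w t) (xp t)) (y t)) :=
      (hconc (y t)).le_map_centerMass (fun j _ => (hwpos t j).le) (hWpos t)
        (fun j _ => hxp t j)
    have hcm : Finset.univ.centerMass (w t) (xp t) = xh t := rfl
    have hcm2 : Finset.univ.centerMass (w t) ((fun x => Real.exp (-η * ℓ x (y t))) ∘ xp t)
        = (W t)⁻¹ * W (t+1) := by
      rw [Finset.centerMass]
      simp only [smul_eq_mul, Function.comp]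
      congr 1
      rw [hW]
      congr 1
      ext j
      have hLs : L (t+1) j = L t j + ℓ (xp t j) (y t) := Finset.sum_range_succ _ _
      show ν j * Real.exp (-η * L t j) * Real.exp (-η * ℓ (xp t j) (y t))
          = ν j * Real.exp (-η * L (t+1) j)
      rw [hLs, mul_assoc, ← Real.exp_add]
      ring_nf
    rw [hcm, hcm2] at hjensen
    -- take logs
    have hlog : Real.log ((W t)⁻¹ * W (t+1)) ≤ -η * ℓ (xh t) (y t) := by
      calc Real.log ((W t)⁻¹ * W (t+1)) ≤ Real.log (Real.exp (-η * ℓ (xh t) (y t))) :=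
            Real.log_le_log (mul_pos (inv_pos.2 (hWpos t)) (hWpos (t+1))) hjensen
        _ = -η * ℓ (xh t) (y t) := Real.log_exp _
    rw [Real.log_mul (inv_ne_zero (hWpos t).ne') (hWpos (t+1)).ne',
        Real.log_inv] at hlog
    rw [div_mul_eq_mul_div, le_div_iff₀ hη]
    nlinarith [hlog]
  -- sum the per-round inequality; telescoping
  have hsum : (∑ t ∈ Finset.range T, ℓ (xh t) (y t))
      ≤ (1/η) * (Real.log (W 0) - Real.log (W T)) := by
    calc (∑ t ∈ Finset.range T, ℓ (xh t) (y t))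
        ≤ ∑ t ∈ Finset.range T, (1/η) * (Real.log (W t) - Real.log (W (t+1))) :=
          Finset.sum_le_sum (fun t _ => key t)
      _ = (1/η) * ∑ t ∈ Finset.range T, (Real.log (W t) - Real.log (W (t+1))) := by
          rw [Finset.mul_sum]
      _ = (1/η) * (Real.log (W 0) - Real.log (W T)) := by
          congr 1
          have := Finset.sum_range_sub (fun t => Real.log (W t)) T
          have h2 : ∑ t ∈ Finset.range T, (Real.log (W t) - Real.log (W (t+1)))
              = -∑ t ∈ Finset.range T, (Real.log (W (t+1)) - Real.log (W t)) := by
            rw [← Finset.sum_neg_distrib]; congr 1; ext t; ring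
          rw [h2, this]; ring
  have hW0 : W 0 = 1 := by
    rw [hW]
    simp only [hw, hL]
    simp [hνs]
  -- lower bound W T by the weight of expert i
  have hWT : Real.log (ν i) + (-η * L T i) ≤ Real.log (W T) := by
    have h1 : w T i ≤ W T :=
      Finset.single_le_sum (fun j _ => (hwpos T j).le) (Finset.mem_univ i)
    calc Real.log (ν i) + (-η * L T i) = Real.log (w T i) := by
          rw [hw, Real.log_mul (hν0 i).ne' (Real.exp_pos _).ne', Real.log_exp]
      _ ≤ Real.log (W T) := Real.log_le_log (hwpos T i) h1
  have hlog1 : Real.log (1 / ν i) = -Real.log (ν i) := by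
    rw [one_div, Real.log_inv]
  rw [hW0, Real.log_one] at hsum
  have h3 : -Real.log (W T) ≤ -Real.log (ν i) + η * L T i := by linarith
  have hη' : (0:ℝ) < 1/η := by positivity
  have h4 : (1/η) * (0 - Real.log (W T)) ≤ (1/η) * (-Real.log (ν i) + η * L T i) := by
    apply mul_le_mul_of_nonneg_left _ hη'.le
    linarith
  have e1 : (1/η) * (-Real.log (ν i) + η * L T i) = (1/η) * (-Real.log (ν i)) + L T i := by
    field_simp
  rw [hlog1]
  have := hsum.trans (h4.trans_eq e1)
  linarith
end

section
/- Run DynamicHedge with learning rate η = 1 and unit prior weights ν_i = 1 over a sequence (M_t)_{t≥1} of finite nonempty sets of contiguous specialists, where each active specialist i ∈ M_t predicts a probability mass function x_{t,i} on a finite outcome set Y with x_{t,i}(y_t) > 0, the learner predicts x_t = (Σ_{i∈M_t} w_{t,i} x_{t,i})/(Σ_{i∈M_t} w_{t,i}), and the losses are the log loss ℓ_{t,i} = −log x_{t,i}(y_t) and ℓ_t = −log x_t(y_t). Then for every time t, the learner's prediction is an exact Bayesian mixture with an adaptive, path-dependent prior: x_t = Σ_{i∈M_t} w_t^i · Λ_i(t)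 · x_{t,i}, where Λ_i(t) = Π_{s=τ_i}^{t−1} x_{s,i}(y_s) is specialist i's likelihood of the outcomes since its arrival time τ_i, and w_t^i = e^{−L_{τ_i−1}} / ( Σ_{j∈M_t} e^{−L_{τ_j−1}} Λ_j(t) ), with L_t = Σ_{s=1}^{t} ℓ_s the learner's cumulative loss (L_0 = 0). -/
/-- **DynamicHedge with log loss is an exact Bayesian mixture with an adaptive prior.**
Run DynamicHedge with `η = 1` and unit prior weights over a sequence
`(Mt t)_{t ≥ 1}` of finite nonempty sets of contiguous specialists (each active
exactly on a contiguous interval starting at its arrival time `τ i ≥ 1`), where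
each active specialist `i ∈ Mt t` predicts a probability mass function `x t i`
on the finite outcome set `Y` with `x t i (y t) > 0`; the learner predicts the
normalized weighted average, the losses are the log losses, and
`L t = ∑_{s=1}^t ℓ s`.  Then at every time `t ≥ 1` the learner's prediction is
the exact Bayesian mixture
`x_t = ∑_{i ∈ Mt t} w_t^i Λ_i(t) x_{t,i}`, where `Λ_i(t) = ∏_{s=τ i}^{t-1} x s i (y s)`
and `w_t^i = exp (−L_{τ i − 1}) / ∑_{j ∈ Mt t} exp (−L_{τ j − 1}) Λ_j(t)`. -/
theorem dynamicHedge_log_loss_bayes_mixture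
    {ι Y : Type*} [Fintype Y]
    (Mt : ℕ → Finset ι)
    (hMne : ∀ t, 1 ≤ t → (Mt t).Nonempty)
    (τ : ι → ℕ) (hτ1 : ∀ i, 1 ≤ τ i)
    (hτle : ∀ t i, i ∈ Mt t → τ i ≤ t)
    (hτint : ∀ i s t, τ i ≤ s → s ≤ t → i ∈ Mt t → i ∈ Mt s)
    (x : ℕ → ι → Y → ℝ) (y : ℕ → Y)
    (hxnn : ∀ t, 1 ≤ t → ∀ i ∈ Mt t, ∀ z, 0 ≤ x t i z)
    (hxsum : ∀ t, 1 ≤ t → ∀ i ∈ Mt t, ∑ z, x t i z = 1)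
    (hxpos : ∀ t, 1 ≤ t → ∀ i ∈ Mt t, 0 < x t i (y t))
    (w : ℕ → ι → ℝ) (ℓ : ℕ → ℝ)
    (hℓ : ∀ t, 1 ≤ t →
        ℓ t = -Real.log ((∑ i ∈ Mt t, w t i * x t i (y t)) / (∑ i ∈ Mt t, w t i)))
    (hw1 : ∀ i ∈ Mt 1, w 1 i = 1)
    (hstay : ∀ t, 1 ≤ t → ∀ i, i ∈ Mt t → i ∈ Mt (t + 1) →
        w (t + 1) i = w t i * Real.exp (-(-Real.log (x t i (y t)))))
    (hnew : ∀ t, 1 ≤ t → ∀ i, i ∈ Mt (t + 1) → i ∉ Mt t →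
        w (t + 1) i = Real.exp (-∑ s ∈ Finset.Icc 1 t, ℓ s))
    (t : ℕ) (ht : 1 ≤ t) (z : Y) :
    (∑ i ∈ Mt t, w t i * x t i z) / (∑ i ∈ Mt t, w t i)
      = ∑ i ∈ Mt t,
          (Real.exp (-∑ s ∈ Finset.Icc 1 (τ i - 1), ℓ s) /
            ∑ j ∈ Mt t, Real.exp (-∑ s ∈ Finset.Icc 1 (τ j - 1), ℓ s) *
              ∏ s ∈ Finset.Ico (τ j) t, x s j (y s)) *
          (∏ s ∈ Finset.Ico (τ i) t, x s i (y s)) * x t i z := by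
  have key : ∀ t, 1 ≤ t → ∀ i ∈ Mt t,
      w t i = Real.exp (-∑ s ∈ Finset.Icc 1 (τ i - 1), ℓ s) *
        ∏ s ∈ Finset.Ico (τ i) t, x s i (y s) := by
    intro t ht
    induction t, ht using Nat.le_induction with
    | base =>
      intro i hi
      have hτ : τ i = 1 := le_antisymm (hτle 1 i hi) (hτ1 i)
      simp [hw1 i hi, hτ]
    | succ t ht ih =>
      intro i hi
      by_cases hmem : i ∈ Mt t
      · have hτi : τ i ≤ t := hτle t i hmem
        rw [hstay t ht i hmem hi, ih i hmem, neg_neg,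
          Real.exp_log (hxpos t ht i hmem), mul_assoc,
          ← Finset.prod_Ico_succ_top hτi]
      · have hτi : τ i = t + 1 := by
          rcases lt_or_eq_of_le (hτle (t+1) i hi) with h | h
          · exact absurd (hτint i t (t+1) (Nat.lt_succ_iff.mp h) (Nat.le_succ t) hi) hmem
          · exact h
        rw [hnew t ht i hi hmem, hτi]
        simp
  have hD : (∑ i ∈ Mt t, w t i)
      = ∑ j ∈ Mt t, Real.exp (-∑ s ∈ Finset.Icc 1 (τ j - 1), ℓ s) *
          ∏ s ∈ Finset.Ico (τ j) t, x s j (y s) :=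
    Finset.sum_congr rfl fun i hi => key t ht i hi
  rw [hD, Finset.sum_div]
  refine Finset.sum_congr rfl fun i hi => ?_
  rw [key t ht i hi]
  ring
end

section
/- Run DynamicHedge with η = 1 and unit prior weights ν_i = 1 over a sequence (M_t)_{1≤t≤T} of finite nonempty sets of contiguous specialists, with losses ℓ_{t,i} ≥ 0 for active specialists, learner losses ℓ_t satisfying the mixability identity e^{−ℓ_t} = Σ_{i∈M_t} ŵ_{t,i} e^{−ℓ_{t,i}} (where ŵ_{t,i} = w_{t,i}/Σ_{j∈M_t} w_{t,j}), and the specialist-aggregation loss convention L_{t,i} = Σ_{s≤t, i∈M_s} ℓ_{s,i} + Σ_{s≤t, i∉M_s} ℓ_s with weights w_{t,i} = e^{−L_{t−1,i}}. Let M̄_T = ∪_{1≤s≤T} M_s be the set of all specialists seen up to time T. Then for every specialist j ∈ M̄_T with arrival time τ_j: (i) for every i ∈ M̄_T, L_{τ_j−1, j} − L_{τ_j−1, i} ≤ log |M̄_T|; and consequently (ii) the normalized weight of j at its arrival time satisfies ŵ^{j}_{τ_j} = w_{τ_j, j} / ( Σ_{i∈M̄_T} w_{τ_j, i} ) ≥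 1 / |M̄_T|². -/
/-- **DynamicHedge arrival-weight lower bound.**
Run DynamicHedge with `η = 1` and unit prior weights over a sequence
`(Mt t)_{1 ≤ t ≤ T}` of finite nonempty sets of contiguous specialists (each
active exactly on a contiguous interval starting at its arrival time `τ i ≥ 1`),
with nonnegative losses `ℓs t i ≥ 0` for active specialists, learner losses
`ℓ t` satisfying the mixability identity
`exp (−ℓ t) = ∑_{i ∈ Mt t} ŵ_{t,i} exp (−ℓ_{t,i})`, the specialist-aggregation
loss convention `L_{t,i} = ∑_{s ≤ t, i ∈ M_s} ℓ_{s,i} + ∑_{s ≤ t, i ∉ M_s} ℓ_s`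
and weights `w t i = exp (−L_{t−1,i})`.  Let `M̄_T = ⋃_{1 ≤ s ≤ T} Mt s`.
Then for every specialist `j ∈ M̄_T`: (i) `L_{τ j −1, j} − L_{τ j −1, i} ≤ log |M̄_T|`
for every `i ∈ M̄_T`; and (ii) the normalized weight of `j` at its arrival time
satisfies `w (τ j) j / ∑_{i ∈ M̄_T} w (τ j) i ≥ 1/|M̄_T|²`. -/
theorem dynamicHedge_arrival_weight_bound
    {ι : Type*} [DecidableEq ι]
    (T : ℕ) (hT : 1 ≤ T)
    (Mt : ℕ → Finset ι)
    (hMne : ∀ t ∈ Finset.Icc 1 T, (Mt t).Nonempty)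
    (τ : ι → ℕ) (hτ1 : ∀ i, 1 ≤ τ i)
    (hτle : ∀ t i, i ∈ Mt t → τ i ≤ t)
    (hτint : ∀ i s t, τ i ≤ s → s ≤ t → i ∈ Mt t → i ∈ Mt s)
    (ℓs : ℕ → ι → ℝ) (ℓ : ℕ → ℝ)
    (hℓnn : ∀ t ∈ Finset.Icc 1 T, ∀ i ∈ Mt t, 0 ≤ ℓs t i)
    (Labs : ℕ → ι → ℝ)
    (hLabs : ∀ t i, Labs t i = ∑ s ∈ Finset.Icc 1 t, (if i ∈ Mt s then ℓs s i else ℓ s))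
    (w : ℕ → ι → ℝ)
    (hwdef : ∀ t i, w t i = Real.exp (-(Labs (t - 1) i)))
    (hmix : ∀ t ∈ Finset.Icc 1 T,
        Real.exp (-(ℓ t)) =
          ∑ i ∈ Mt t, (w t i / ∑ j ∈ Mt t, w t j) * Real.exp (-(ℓs t i)))
    (j : ι) (hj : j ∈ (Finset.Icc 1 T).biUnion Mt) :
    (∀ i ∈ (Finset.Icc 1 T).biUnion Mt,
        Labs (τ j - 1) j - Labs (τ j - 1) i
          ≤ Real.log (((Finset.Icc 1 T).biUnion Mt).card)) ∧
    1 / (((Finset.Icc 1 T).biUnion Mt).card : ℝ) ^ 2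
      ≤ w (τ j) j / ∑ i ∈ (Finset.Icc 1 T).biUnion Mt, w (τ j) i := by
  classical
  set B := (Finset.Icc 1 T).biUnion Mt with hB
  obtain ⟨s₀, hs₀, hjM⟩ := Finset.mem_biUnion.mp hj
  have hτjT : τ j ≤ T := le_trans (hτle _ _ hjM) (Finset.mem_Icc.mp hs₀).2
  have hBne : B.Nonempty := ⟨j, hj⟩
  have hNpos : 0 < (B.card : ℝ) := by exact_mod_cast Finset.card_pos.mpr hBne
  have hN1 : (1 : ℝ) ≤ (B.card : ℝ) := by
    exact_mod_cast Finset.card_pos.mpr hBne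
  -- potential identity
  have key : ∀ t, t ≤ T →
      ∑ i ∈ B, Real.exp (-(Labs t i)) =
        (B.card : ℝ) * Real.exp (-(∑ s ∈ Finset.Icc 1 t, ℓ s)) := by
    intro t
    induction t with
    | zero => intro _; simp [hLabs]
    | succ t ih =>
      intro ht
      have ht' : t ≤ T := Nat.le_of_succ_le ht
      have htm : t + 1 ∈ Finset.Icc 1 T := Finset.mem_Icc.mpr ⟨by omega, ht⟩
      have hsplit : ∀ i, Labs (t+1) i
          = Labs t i + (if i ∈ Mt (t+1) then ℓs (t+1) i else ℓ (t+1)) := by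
        intro i
        rw [hLabs, hLabs, ← Finset.sum_Icc_succ_top (by omega : 1 ≤ t + 1)]
      have hMsub : Mt (t+1) ⊆ B := fun i hi => Finset.mem_biUnion.mpr ⟨t+1, htm, hi⟩
      have hne : (Mt (t+1)).Nonempty := hMne _ htm
      have hSpos : 0 < ∑ i ∈ Mt (t+1), w (t+1) i :=
        Finset.sum_pos (fun i _ => by rw [hwdef]; exact Real.exp_pos _) hne
      have hmix' : ∑ i ∈ Mt (t+1), w (t+1) i * Real.exp (-(ℓs (t+1) i))
          = Real.exp (-(ℓ (t+1))) * ∑ i ∈ Mt (t+1), w (t+1) i := by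
        have h := hmix (t+1) htm
        rw [h, Finset.sum_mul]
        refine Finset.sum_congr rfl fun i _ => ?_
        field_simp
      have hw' : ∀ i, w (t+1) i = Real.exp (-(Labs t i)) := by
        intro i; rw [hwdef]; norm_num
      have hstep : ∑ i ∈ B, Real.exp (-(Labs (t+1) i))
          = Real.exp (-(ℓ (t+1))) * ∑ i ∈ B, Real.exp (-(Labs t i)) := by
        have hrw : ∀ i ∈ B, Real.exp (-(Labs (t+1) i))
            = (if i ∈ Mt (t+1) then Real.exp (-(Labs t i)) * Real.exp (-(ℓs (t+1) i))
               else Real.exp (-(Labs t i)) * Real.exp (-(ℓ (t+1)))) := by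
          intro i _
          by_cases h : i ∈ Mt (t+1)
          · rw [hsplit, if_pos h, if_pos h, neg_add, Real.exp_add]
          · rw [hsplit, if_neg h, if_neg h, neg_add, Real.exp_add]
        rw [Finset.sum_congr rfl hrw, Finset.sum_ite]
        have hfil : B.filter (· ∈ Mt (t+1)) = Mt (t+1) := by
          apply Finset.Subset.antisymm
          · intro i hi; exact (Finset.mem_filter.mp hi).2
          · intro i hi; exact Finset.mem_filter.mpr ⟨hMsub hi, hi⟩
        rw [hfil]
        have h1 : ∑ i ∈ Mt (t+1), Real.exp (-(Labs t i)) * Real.exp (-(ℓs (t+1) i))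
            = Real.exp (-(ℓ (t+1))) * ∑ i ∈ Mt (t+1), Real.exp (-(Labs t i)) := by
          have := hmix'
          simp only [hw'] at this
          exact this
        have h2 : ∑ i ∈ B.filter (· ∉ Mt (t+1)),
              Real.exp (-(Labs t i)) * Real.exp (-(ℓ (t+1)))
            = Real.exp (-(ℓ (t+1))) * ∑ i ∈ B.filter (· ∉ Mt (t+1)),
                Real.exp (-(Labs t i)) := by
          rw [Finset.mul_sum]
          exact Finset.sum_congr rfl fun i _ => mul_comm _ _
        rw [h1, h2, ← mul_add]
        congr 1
        have hadd := Finset.sum_filter_add_sum_filter_not B (· ∈ Mt (t+1))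
          (fun i => Real.exp (-(Labs t i)))
        rw [hfil] at hadd
        exact hadd
      rw [hstep, ih ht', Finset.sum_Icc_succ_top (by omega : 1 ≤ t + 1),
        neg_add, Real.exp_add]
      ring
  -- j accumulates learner losses before arrival
  have hLj : Labs (τ j - 1) j = ∑ s ∈ Finset.Icc 1 (τ j - 1), ℓ s := by
    rw [hLabs]
    refine Finset.sum_congr rfl fun s hs => ?_
    rw [if_neg]
    intro hmem
    have h1 := hτle s j hmem
    have h2 := (Finset.mem_Icc.mp hs).2
    have := hτ1 j
    omega
  have hkey : ∑ i ∈ B, Real.exp (-(Labs (τ j - 1) i))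
      = (B.card : ℝ) * Real.exp (-(Labs (τ j - 1) j)) := by
    rw [key (τ j - 1) (by omega), hLj]
  constructor
  · intro i hi
    have hle : Real.exp (-(Labs (τ j - 1) i)) ≤ ∑ k ∈ B, Real.exp (-(Labs (τ j - 1) k)) :=
      Finset.single_le_sum (f := fun k => Real.exp (-(Labs (τ j - 1) k)))
        (fun k _ => (Real.exp_pos _).le) hi
    rw [hkey] at hle
    rw [Real.le_log_iff_exp_le hNpos]
    have hpos : 0 < Real.exp (-(Labs (τ j - 1) j)) := Real.exp_pos _
    have : Real.exp (Labs (τ j - 1) j - Labs (τ j - 1) i)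
        = Real.exp (-(Labs (τ j - 1) i)) / Real.exp (-(Labs (τ j - 1) j)) := by
      rw [← Real.exp_sub]; ring_nf
    rw [this]
    rw [div_le_iff₀ hpos]
    linarith [hle]
  · have hwτ : ∀ i, w (τ j) i = Real.exp (-(Labs (τ j - 1) i)) := fun i => hwdef _ _
    have hden : ∑ i ∈ B, w (τ j) i = (B.card : ℝ) * Real.exp (-(Labs (τ j - 1) j)) := by
      rw [Finset.sum_congr rfl fun i _ => hwτ i, hkey]
    rw [hden, hwτ]
    have hpos : 0 < Real.exp (-(Labs (τ j - 1) j)) := Real.exp_pos _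
    have hratio : Real.exp (-(Labs (τ j - 1) j))
        / ((B.card : ℝ) * Real.exp (-(Labs (τ j - 1) j))) = 1 / (B.card : ℝ) := by
      rw [mul_comm, ← div_div, div_self hpos.ne']
    rw [hratio]
    have : (B.card : ℝ) ≤ (B.card : ℝ) ^ 2 := by nlinarith
    apply one_div_le_one_div_of_le hNpos this
end

section
/- Fix D ∈ ℕ. Call T a context-tree model of depth at most D if T is a finite subtree of the complete binary tree of depth D containing the root such that every node of T either has both of its children in T or neither, and all nodes of T have depth at most D; let Γ_D(T) be the number of nodes of T of depth strictly less than D. Then Σ_T 2^{−Γ_D(T)} = 1, where the sum ranges over all context-tree models T of depth at most D; that is, the CTW coding-length prior 2^{−Γ_D(·)} is a probability distribution over context-tree models of depth at most D. -/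
open scoped Classical

namespace CTWPrior

def strsOfLen (n : ℕ) : Finset (List Bool) :=
  (Finset.univ : Finset (Fin n → Bool)).image fun f => List.ofFn f

def allStrs (D : ℕ) : Finset (List Bool) :=
  (Finset.range (D + 1)).biUnion strsOfLen

def IsModel (D : ℕ) (T : Finset (List Bool)) : Prop :=
  ([] ∈ T) ∧ (∀ s ∈ T, s.length ≤ D) ∧
    (∀ s ∈ T, ((s ++ [false]) ∈ T ↔ (s ++ [true]) ∈ T)) ∧
    (∀ (s : List Bool) (b : Bool), s ++ [b] ∈ T → s ∈ T)

lemma mem_strsOfLen {n : ℕ} {s : List Bool} : s ∈ strsOfLen n ↔ s.length = n := by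
  constructor
  · rintro hs
    simp only [strsOfLen, Finset.mem_image] at hs
    obtain ⟨f, -, rfl⟩ := hs
    simp
  · rintro rfl
    simp only [strsOfLen, Finset.mem_image]
    exact ⟨s.get, Finset.mem_univ _, List.ofFn_get s⟩

lemma mem_allStrs {D : ℕ} {s : List Bool} : s ∈ allStrs D ↔ s.length ≤ D := by
  simp only [allStrs, Finset.mem_biUnion, Finset.mem_range, mem_strsOfLen]
  constructor
  · rintro ⟨i, hi, rfl⟩; omega
  · intro h; exact ⟨s.length, by omega, rfl⟩

lemma mem_M {D : ℕ} {T : Finset (List Bool)} :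
    T ∈ (allStrs D).powerset.filter (IsModel D) ↔ IsModel D T := by
  simp only [Finset.mem_filter, Finset.mem_powerset]
  constructor
  · exact fun h => h.2
  · intro h
    exact ⟨fun s hs => mem_allStrs.mpr (h.2.1 s hs), h⟩

/-- glue two trees under a new root -/
def glue (T₀ T₁ : Finset (List Bool)) : Finset (List Bool) :=
  insert [] ((T₀.image (List.cons false)) ∪ (T₁.image (List.cons true)))

lemma cons_mem_glue {T₀ T₁ : Finset (List Bool)} {b : Bool} {t : List Bool} :
    (b :: t) ∈ glue T₀ T₁ ↔ t ∈ (bif b then T₁ else T₀) := by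
  cases b <;> simp [glue]

lemma nil_mem_glue {T₀ T₁ : Finset (List Bool)} : ([] : List Bool) ∈ glue T₀ T₁ := by
  simp [glue]

/-- subtree rooted at a child of the root -/
def sub (b : Bool) (T : Finset (List Bool)) : Finset (List Bool) :=
  (T.filter fun s => s.head? = some b).image List.tail

lemma mem_sub {b : Bool} {T : Finset (List Bool)} {t : List Bool} :
    t ∈ sub b T ↔ (b :: t) ∈ T := by
  simp only [sub, Finset.mem_image, Finset.mem_filter]
  constructor
  · rintro ⟨s, ⟨hs, hh⟩, rfl⟩
    cases s with
    | nil => simp at hh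
    | cons c u => simp at hh; subst hh; exact hs
  · intro h
    exact ⟨b :: t, ⟨h, rfl⟩, rfl⟩

lemma model_children {D : ℕ} {T : Finset (List Bool)} (hT : IsModel D T) :
    ∀ s ∈ T, s ≠ [] → ([false] ∈ T ∧ [true] ∈ T) := by
  intro s
  induction s using List.reverseRecOn with
  | nil => intro _ h; exact absurd rfl h
  | append_singleton t c ih =>
    intro hs _
    have ht : t ∈ T := hT.2.2.2 t c hs
    rcases eq_or_ne t [] with rfl | hne
    · have hpair := hT.2.2.1 [] hT.1
      simp only [List.nil_append] at hpair ⊢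
      cases c
      · exact ⟨hs, hpair.mp hs⟩
      · exact ⟨hpair.mpr hs, hs⟩
    · exact ih ht hne

lemma isModel_glue {D : ℕ} {T₀ T₁ : Finset (List Bool)}
    (h₀ : IsModel D T₀) (h₁ : IsModel D T₁) : IsModel (D + 1) (glue T₀ T₁) := by
  refine ⟨nil_mem_glue, ?_, ?_, ?_⟩
  · intro s hs
    rcases s with _ | ⟨b, t⟩
    · simp
    · rw [cons_mem_glue] at hs
      cases b
      · simpa using Nat.succ_le_succ (h₀.2.1 t hs)
      · simpa using Nat.succ_le_succ (h₁.2.1 t hs)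
  · intro s hs
    rcases s with _ | ⟨b, t⟩
    · simp only [List.nil_append]
      rw [show ([false] : List Bool) = false :: [] from rfl,
        show ([true] : List Bool) = true :: [] from rfl, cons_mem_glue, cons_mem_glue]
      simp [h₀.1, h₁.1]
    · rw [cons_mem_glue] at hs
      rw [show (b :: t) ++ [false] = b :: (t ++ [false]) from rfl,
        show (b :: t) ++ [true] = b :: (t ++ [true]) from rfl, cons_mem_glue, cons_mem_glue]
      cases b
      · exact h₀.2.2.1 t hs
      · exact h₁.2.2.1 t hs
  · intro s b hs
    rcases s with _ | ⟨c, t⟩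
    · exact nil_mem_glue
    · rw [show (c :: t) ++ [b] = c :: (t ++ [b]) from rfl, cons_mem_glue] at hs
      rw [cons_mem_glue]
      cases c
      · exact h₀.2.2.2 t b hs
      · exact h₁.2.2.2 t b hs

lemma isModel_sub {D : ℕ} {T : Finset (List Bool)} (hT : IsModel (D + 1) T)
    (hne : T ≠ {[]}) (b : Bool) : IsModel D (sub b T) := by
  have hchild : [false] ∈ T ∧ [true] ∈ T := by
    have : ∃ s ∈ T, s ≠ [] := by
      by_contra h
      push_neg at h
      apply hne
      apply Finset.eq_singleton_iff_unique_mem.mpr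
      exact ⟨hT.1, fun x hx => h x hx⟩
    obtain ⟨s, hs, hsne⟩ := this
    exact model_children hT s hs hsne
  refine ⟨?_, ?_, ?_, ?_⟩
  · rw [mem_sub]; cases b; exacts [hchild.1, hchild.2]
  · intro t ht
    rw [mem_sub] at ht
    have := hT.2.1 _ ht
    simpa using this
  · intro t ht
    rw [mem_sub] at ht
    rw [mem_sub, mem_sub,
      show b :: (t ++ [false]) = (b :: t) ++ [false] from rfl,
      show b :: (t ++ [true]) = (b :: t) ++ [true] from rfl]
    exact hT.2.2.1 _ ht
  · intro t c ht
    rw [mem_sub, show b :: (t ++ [c]) = (b :: t) ++ [c] from rfl] at ht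
    rw [mem_sub]
    exact hT.2.2.2 _ c ht

lemma sub_glue {T₀ T₁ : Finset (List Bool)} (b : Bool) :
    sub b (glue T₀ T₁) = (bif b then T₁ else T₀) := by
  ext t
  rw [mem_sub, cons_mem_glue]

lemma glue_sub {T : Finset (List Bool)} (hroot : ([] : List Bool) ∈ T) :
    glue (sub false T) (sub true T) = T := by
  ext s
  rcases s with _ | ⟨b, t⟩
  · simp [nil_mem_glue, hroot]
  · rw [cons_mem_glue]
    cases b <;> simp [mem_sub]

lemma filter_glue {D : ℕ} (T₀ T₁ : Finset (List Bool)) :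
    (glue T₀ T₁).filter (fun s => s.length < D + 1) =
      glue (T₀.filter fun s => s.length < D) (T₁.filter fun s => s.length < D) := by
  ext s
  rcases s with _ | ⟨b, t⟩
  · simp [nil_mem_glue, Finset.mem_filter]
  · rw [Finset.mem_filter, cons_mem_glue, cons_mem_glue]
    cases b <;> simp [Finset.mem_filter, Nat.succ_lt_succ_iff, and_comm]

lemma card_glue (T₀ T₁ : Finset (List Bool)) :
    (glue T₀ T₁).card = T₀.card + T₁.card + 1 := by
  have hinj₀ : Function.Injective (List.cons false : List Bool → List Bool) :=
    fun a b h => by simpa using h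
  have hinj₁ : Function.Injective (List.cons true : List Bool → List Bool) :=
    fun a b h => by simpa using h
  have hdisj : Disjoint (T₀.image (List.cons false)) (T₁.image (List.cons true)) := by
    rw [Finset.disjoint_left]
    rintro s hs₀ hs₁
    simp only [Finset.mem_image] at hs₀ hs₁
    obtain ⟨a, -, rfl⟩ := hs₀
    obtain ⟨c, -, h⟩ := hs₁
    simp at h
  have hnil : ([] : List Bool) ∉ (T₀.image (List.cons false)) ∪ (T₁.image (List.cons true)) := by
    simp
  rw [glue, Finset.card_insert_of_notMem hnil, Finset.card_union_of_disjoint hdisj,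
    Finset.card_image_of_injective _ hinj₀, Finset.card_image_of_injective _ hinj₁]

lemma weight_glue (D : ℕ) (A B : Finset (List Bool)) :
    (2 : ℝ) ^ (-((((glue A B).filter fun s => s.length < D + 1).card : ℤ))) =
      (1 / 2 : ℝ) * ((2 : ℝ) ^ (-(((A.filter fun s => s.length < D).card : ℤ))) *
        (2 : ℝ) ^ (-(((B.filter fun s => s.length < D).card : ℤ)))) := by
  rw [filter_glue, card_glue]
  have h : (-((((A.filter fun s => s.length < D).card +
      (B.filter fun s => s.length < D).card + 1 : ℕ)) : ℤ)) =
      (-1) + (-(((A.filter fun s => s.length < D).card : ℤ))) +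
        (-(((B.filter fun s => s.length < D).card : ℤ))) := by
    push_cast; ring
  rw [h, zpow_add₀ (two_ne_zero), zpow_add₀ (two_ne_zero)]
  norm_num
  ring

/-- **The CTW coding-length prior is a probability distribution.**
Summing `2^{−Γ_D(T)}` over all context-tree models `T` of depth at most `D`
gives 1, where `Γ_D(T)` is the number of nodes of `T` of depth strictly less
than `D`. -/
theorem ctw_prior_sums_to_one (D : ℕ) :
    (∑ T ∈ (allStrs D).powerset.filter (IsModel D),
        (2 : ℝ) ^ (-(((T.filter fun s => s.length < D).card : ℤ)))) = 1 := by
  induction D with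
  | zero =>
    have hM : (allStrs 0).powerset.filter (IsModel 0) = {({[]} : Finset (List Bool))} := by
      ext T
      rw [mem_M, Finset.mem_singleton]
      constructor
      · intro h
        apply Finset.eq_singleton_iff_unique_mem.mpr
        refine ⟨h.1, fun s hs => ?_⟩
        have := h.2.1 s hs
        exact List.eq_nil_of_length_eq_zero (Nat.le_zero.mp this)
      · rintro rfl
        refine ⟨by simp, by simp, ?_, ?_⟩
        · intro s hs
          simp only [Finset.mem_singleton] at hs
          subst hs
          simp
        · intro s b hs
          simp only [Finset.mem_singleton] at hs
          exact absurd hs (by simp)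
    rw [hM, Finset.sum_singleton]
    have : ({[]} : Finset (List Bool)).filter (fun s => s.length < 0) = ∅ := by
      ext s; simp
    rw [this]
    simp
  | succ D ih =>
    set M := (allStrs (D + 1)).powerset.filter (IsModel (D + 1)) with hMdef
    have hroot_mem : ({[]} : Finset (List Bool)) ∈ M := by
      rw [hMdef, mem_M]
      refine ⟨by simp, by simp, ?_, ?_⟩
      · intro s hs
        simp only [Finset.mem_singleton] at hs
        subst hs
        simp
      · intro s b hs
        simp only [Finset.mem_singleton] at hs
        exact absurd hs (by simp)
    rw [← Finset.add_sum_erase _ _ hroot_mem]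
    have hrootw : (2 : ℝ) ^ (-(((({[]} : Finset (List Bool)).filter
        fun s => s.length < D + 1).card : ℤ))) = 1 / 2 := by
      have : ({[]} : Finset (List Bool)).filter (fun s => s.length < D + 1) = {[]} := by
        ext s; simp (config := {decide := false}) [Finset.mem_filter]
        rintro rfl; simp
      rw [this]
      norm_num
    rw [hrootw]
    have hsum : ∑ T ∈ M.erase {[]},
        (2 : ℝ) ^ (-(((T.filter fun s => s.length < D + 1).card : ℤ))) =
        ∑ p ∈ ((allStrs D).powerset.filter (IsModel D)) ×ˢ
            ((allStrs D).powerset.filter (IsModel D)),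
          (1 / 2 : ℝ) * ((2 : ℝ) ^ (-(((p.1.filter fun s => s.length < D).card : ℤ))) *
            (2 : ℝ) ^ (-(((p.2.filter fun s => s.length < D).card : ℤ)))) := by
      refine Finset.sum_nbij' (fun T => (sub false T, sub true T))
        (fun p => glue p.1 p.2) ?_ ?_ ?_ ?_ ?_
      · intro T hT
        rw [Finset.mem_erase, hMdef, mem_M] at hT
        rw [Finset.mem_product, mem_M, mem_M]
        exact ⟨isModel_sub hT.2 hT.1 false, isModel_sub hT.2 hT.1 true⟩
      · intro p hp
        rw [Finset.mem_product, mem_M, mem_M] at hp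
        rw [Finset.mem_erase, hMdef, mem_M]
        refine ⟨?_, isModel_glue hp.1 hp.2⟩
        intro h
        have : (false :: [] : List Bool) ∈ glue p.1 p.2 := by
          rw [cons_mem_glue]; exact hp.1.1
        rw [h] at this
        simp at this
      · intro T hT
        rw [Finset.mem_erase, hMdef, mem_M] at hT
        exact glue_sub hT.2.1
      · intro p hp
        ext : 1 <;> simp [sub_glue]
      · intro T hT
        rw [Finset.mem_erase, hMdef, mem_M] at hT
        conv_lhs => rw [← glue_sub hT.2.1]
        exact weight_glue D _ _
    rw [hsum, Finset.sum_product]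
    have : ∀ A : Finset (List Bool), ∑ T₁ ∈ (allStrs D).powerset.filter (IsModel D),
        (1 / 2 : ℝ) * ((2 : ℝ) ^ (-(((A.filter fun s => s.length < D).card : ℤ))) *
          (2 : ℝ) ^ (-(((T₁.filter fun s => s.length < D).card : ℤ)))) =
        (1 / 2 : ℝ) * (2 : ℝ) ^ (-(((A.filter fun s => s.length < D).card : ℤ))) := by
      intro A
      rw [← Finset.mul_sum, ← Finset.mul_sum, ih]
      ring
    rw [Finset.sum_congr rfl fun A _ => this A, ← Finset.mul_sum, ih]
    norm_num

end CTWPrior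
end
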